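/- A connected finite simple graph G contains P_4 as a contraction if and only if there exist two nonadjacent vertices u and v of G with N(u) ≠ ∅, N(v) ≠ ∅ and N(u) ∩ N(v) = ∅, together with a partition of V(G) \ {u, v} into two sets A_1 and A_2 such that N(u) ⊆ A_1, N(v) ⊆ A_2, and both G[A_1] and G[A_2] are connected. -/

import Mathlib

/-- `W` is an `H`-witness structure of `G`: a family of pairwise disjoint nonempty
connected subsets of `V(G)` covering `V(G)` such that distinct `h₁ h₂` are adjacent in `H`
iff there is an edge of `G` between `W h₁` and `W h₂`. -/
def IsWitnessStructure {V U : Type*} (G : SimpleGraph V) (H : SimpleGraph U)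
    (W : U → Set V) : Prop :=
  (∀ h, (W h).Nonempty) ∧
  (∀ h₁ h₂, h₁ ≠ h₂ → Disjoint (W h₁) (W h₂)) ∧
  (⋃ h, W h) = Set.univ ∧
  (∀ h, (G.induce (W h)).Connected) ∧
  (∀ h₁ h₂, h₁ ≠ h₂ → ((∃ a ∈ W h₁, ∃ b ∈ W h₂, G.Adj a b) ↔ H.Adj h₁ h₂))

/-- `G` contains `H` as a contraction. -/
def ContainsAsContraction {V U : Type*} (G : SimpleGraph V) (H : SimpleGraph U) : Prop :=
  ∃ W : U → Set V, IsWitnessStructure G H W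

/-!
Given a `P₄`-witness structure `W₀, W₁, W₂, W₃`, pick `u ∈ W₀` such that `G[(W₀ \ {u}) ∪ W₁]`
stays connected: a leaf of a spanning tree of `G[W₀]` other than the end of a `W₀–W₁` edge (or
the only vertex of `W₀`). Pick `v ∈ W₃` symmetrically; then `A₁ = (W₀ \ {u}) ∪ W₁` and
`A₂ = (W₃ \ {v}) ∪ W₂` work. Conversely `{u}, A₁, A₂, {v}` is a witness structure, the
`A₁–A₂` edge coming from the connectivity of `G`.
-/

namespace SimpleGraph

variable {V : Type*} {G : SimpleGraph V}

theorem Connected.exists_ne_connected_induce_compl_singleton [Finite V] [Nontrivial V]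
    (hG : G.Connected) (a : V) : ∃ u ≠ a, (G.induce {u}ᶜ).Connected := by
  classical
  have := Fintype.ofFinite V
  obtain ⟨T, hTG, hT⟩ := hG.exists_isTree_le
  obtain ⟨x, y, hxy, hx, hy⟩ := hT.exists_ne_and_degree_eq_one
  have hleaf : ∀ z, T.degree z = 1 → (G.induce {z}ᶜ).Connected := fun z hz =>
    (hT.connected.induce_compl_singleton_of_degree_eq_one hz).mono (fun _ _ h => hTG h)
  by_cases hxa : x = a
  · exact ⟨y, hxa ▸ hxy.symm, hleaf y hy⟩
  · exact ⟨x, hxa, hleaf x hx⟩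

theorem exists_ne_connected_induce_diff_singleton [Finite V] {S : Set V}
    (hS : (G.induce S).Connected) (hS' : S.Nontrivial) {a : V} (ha : a ∈ S) :
    ∃ u ∈ S, u ≠ a ∧ (G.induce (S \ {u})).Connected := by
  have : Nontrivial S := hS'.coe_sort
  obtain ⟨u, hua, hu⟩ := hS.exists_ne_connected_induce_compl_singleton ⟨a, ha⟩
  let f : (G.induce S).induce {u}ᶜ →g G.induce (S \ {u.1}) :=
    { toFun := fun x => ⟨x.1.1, x.1.2, fun h => x.2 (Subtype.ext h)⟩
      map_rel' := id }
  have hf : Function.Surjective f := fun y =>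
    ⟨⟨⟨y.1, y.2.1⟩, fun h => y.2.2 (congrArg Subtype.val h)⟩, rfl⟩
  exact ⟨u, u.2, fun h => hua (Subtype.ext h), hu.map f hf⟩

theorem exists_connected_induce_diff_singleton_union [Finite V] {S T : Set V}
    (hS : (G.induce S).Connected) (hT : (G.induce T).Connected) {a b : V} (ha : a ∈ S)
    (hb : b ∈ T) (hab : G.Adj a b) : ∃ u ∈ S, (G.induce (S \ {u} ∪ T)).Connected := by
  rcases S.subsingleton_or_nontrivial with hS' | hS'
  · refine ⟨a, ha, ?_⟩
    rwa [hS'.eq_singleton_of_mem ha, Set.sdiff_self, Set.empty_union]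
  · obtain ⟨u, hu, hua, hu'⟩ := exists_ne_connected_induce_diff_singleton hS hS' ha
    exact ⟨u, hu, connected_induce_union hu'.preconnected hT.preconnected ⟨ha, hua.symm⟩ hb hab⟩

theorem Preconnected.exists_adj_of_mem_of_notMem (hG : G.Preconnected) {S : Set V} {x y : V}
    (hx : x ∈ S) (hy : y ∉ S) : ∃ a ∈ S, ∃ b ∉ S, G.Adj a b := by
  obtain ⟨p⟩ := hG x y
  obtain ⟨d, -, hd₁, hd₂⟩ := p.exists_boundary_dart S hx hy
  exact ⟨d.fst, hd₁, d.snd, hd₂, d.adj⟩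

end SimpleGraph

open SimpleGraph

namespace IsWitnessStructure

variable {V U : Type*} {G : SimpleGraph V} {H : SimpleGraph U} {W : U → Set V}

theorem exists_mem (hW : IsWitnessStructure G H W) (x : V) : ∃ i, x ∈ W i :=
  Set.mem_iUnion.mp (hW.2.2.1 ▸ Set.mem_univ x)

theorem disjoint (hW : IsWitnessStructure G H W) {i j : U} (hij : i ≠ j) :
    Disjoint (W i) (W j) :=
  hW.2.1 i j hij

theorem eq_of_mem (hW : IsWitnessStructure G H W) {x : V} {i j : U} (hi : x ∈ W i)
    (hj : x ∈ W j) : i = j :=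
  by_contra fun hij => Set.disjoint_left.mp (hW.disjoint hij) hi hj

theorem connected (hW : IsWitnessStructure G H W) (i : U) : (G.induce (W i)).Connected :=
  hW.2.2.2.1 i

theorem eq_or_adj_of_adj (hW : IsWitnessStructure G H W) {x y : V} {i j : U} (hx : x ∈ W i)
    (hy : y ∈ W j) (hxy : G.Adj x y) : i = j ∨ H.Adj i j :=
  or_iff_not_imp_left.mpr fun hij => (hW.2.2.2.2 i j hij).mp ⟨x, hx, y, hy, hxy⟩

theorem exists_adj_of_adj (hW : IsWitnessStructure G H W) {i j : U} (hij : H.Adj i j) :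
    ∃ x ∈ W i, ∃ y ∈ W j, G.Adj x y :=
  (hW.2.2.2.2 i j hij.ne).mpr hij

theorem neighborSet_subset_of_neighborSet_eq_singleton (hW : IsWitnessStructure G H W)
    {x : V} {i j : U} (hx : x ∈ W i) (hi : H.neighborSet i = {j}) :
    G.neighborSet x ⊆ W i \ {x} ∪ W j := by
  intro y hy
  obtain ⟨k, hk⟩ := hW.exists_mem y
  rcases hW.eq_or_adj_of_adj hx hk hy with rfl | hik
  · exact Or.inl ⟨hk, hy.ne'⟩
  · have hkj : k ∈ H.neighborSet i := hik
    rw [hi, Set.mem_singleton_iff] at hkj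
    exact Or.inr (hkj ▸ hk)

theorem of_lt [LinearOrder U] (hne : ∀ i, (W i).Nonempty)
    (hdisj : ∀ i j, i < j → Disjoint (W i) (W j)) (hcover : ⋃ i, W i = Set.univ)
    (hconn : ∀ i, (G.induce (W i)).Connected)
    (hadj : ∀ i j, i < j → ((∃ x ∈ W i, ∃ y ∈ W j, G.Adj x y) ↔ H.Adj i j)) :
    IsWitnessStructure G H W := by
  have edge_comm : ∀ i j, (∃ x ∈ W i, ∃ y ∈ W j, G.Adj x y) → ∃ x ∈ W j, ∃ y ∈ W i, G.Adj x y :=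
    fun _ _ ⟨x, hx, y, hy, hxy⟩ => ⟨y, hy, x, hx, hxy.symm⟩
  refine ⟨hne, fun i j hij => ?_, hcover, hconn, fun i j hij => ?_⟩
  · rcases hij.lt_or_gt with h | h
    · exact hdisj i j h
    · exact (hdisj j i h).symm
  · rcases hij.lt_or_gt with h | h
    · exact hadj i j h
    · rw [H.adj_comm, ← hadj j i h]
      exact ⟨edge_comm i j, edge_comm j i⟩

end IsWitnessStructure

section PathGraphFour

variable {V : Type*} {G : SimpleGraph V}

theorem IsWitnessStructure.exists_partition_of_pathGraph_four [Finite V] (hG : G.Preconnected)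
    {W : Fin 4 → Set V} (hW : IsWitnessStructure G (pathGraph 4) W) :
    ∃ u v : V, u ≠ v ∧ ¬ G.Adj u v ∧
      (G.neighborSet u).Nonempty ∧ (G.neighborSet v).Nonempty ∧
      G.neighborSet u ∩ G.neighborSet v = ∅ ∧
      ∃ A₁ A₂ : Set V, Disjoint A₁ A₂ ∧ A₁ ∪ A₂ = ({u, v} : Set V)ᶜ ∧
        G.neighborSet u ⊆ A₁ ∧ G.neighborSet v ⊆ A₂ ∧
        (G.induce A₁).Connected ∧ (G.induce A₂).Connected := by
  have hP : ∀ i j : Fin 4, (pathGraph 4).Adj i j ↔ i.val + 1 = j.val ∨ j.val + 1 = i.val :=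
    fun _ _ => pathGraph_adj
  obtain ⟨a, ha, b, hb, hab⟩ := hW.exists_adj_of_adj ((hP 0 1).mpr (by decide))
  obtain ⟨c, hc, d, hd, hcd⟩ := hW.exists_adj_of_adj ((hP 3 2).mpr (by decide))
  obtain ⟨u, hu, hA₁⟩ :=
    exists_connected_induce_diff_singleton_union (hW.connected 0) (hW.connected 1) ha hb hab
  obtain ⟨v, hv, hA₂⟩ :=
    exists_connected_induce_diff_singleton_union (hW.connected 3) (hW.connected 2) hc hd hcd
  have huv : u ≠ v := fun h => absurd (hW.eq_of_mem hu (h ▸ hv)) (by decide)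
  have : Nontrivial V := ⟨⟨u, v, huv⟩⟩
  have hNu : G.neighborSet u ⊆ W 0 \ {u} ∪ W 1 :=
    hW.neighborSet_subset_of_neighborSet_eq_singleton hu (by ext j; simp [hP]; omega)
  have hNv : G.neighborSet v ⊆ W 3 \ {v} ∪ W 2 :=
    hW.neighborSet_subset_of_neighborSet_eq_singleton hv (by ext j; simp [hP]; omega)
  have hdisj : Disjoint (W 0 \ {u} ∪ W 1) (W 3 \ {v} ∪ W 2) := by
    refine Disjoint.mono (Set.union_subset_union_left _ Set.sdiff_subset)
      (Set.union_subset_union_left _ Set.sdiff_subset) ?_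
    simp only [Set.disjoint_union_left, Set.disjoint_union_right]
    exact ⟨⟨hW.disjoint (by decide), hW.disjoint (by decide)⟩,
      hW.disjoint (by decide), hW.disjoint (by decide)⟩
  have hunion : W 0 \ {u} ∪ W 1 ∪ (W 3 \ {v} ∪ W 2) = ({u, v} : Set V)ᶜ := by
    ext x
    obtain ⟨i, hi⟩ := hW.exists_mem x
    have hxu : x = u → i = 0 := fun h => hW.eq_of_mem hi (h ▸ hu)
    have hxv : x = v → i = 3 := fun h => hW.eq_of_mem hi (h ▸ hv)
    have hmem : ∀ j, x ∈ W j ↔ i = j := fun j => ⟨hW.eq_of_mem hi, fun h => h ▸ hi⟩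
    simp only [Set.mem_union, Set.mem_sdiff, Set.mem_singleton_iff, Set.mem_compl_iff,
      Set.mem_insert_iff, not_or, hmem]
    fin_cases i <;> simp_all
  have hnadj : ¬ G.Adj u v := fun h =>
    (hunion ▸ Set.mem_union_left _ (hNu h) : v ∈ ({u, v} : Set V)ᶜ) (by simp)
  refine ⟨u, v, huv, hnadj,
    hG.exists_adj_of_nontrivial u, hG.exists_adj_of_nontrivial v,
    Set.subset_empty_iff.mp fun w hw => Set.disjoint_left.mp hdisj (hNu hw.1) (hNv hw.2),
    _, _, hdisj, hunion, hNu, hNv, hA₁, hA₂⟩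

theorem exists_adj_of_union_eq_compl_pair (hG : G.Preconnected) {u v : V} (huv : u ≠ v)
    {A₁ A₂ : Set V} (hdisj : Disjoint A₁ A₂) (hunion : A₁ ∪ A₂ = ({u, v} : Set V)ᶜ)
    (hNuA : G.neighborSet u ⊆ A₁) (hNvA : G.neighborSet v ⊆ A₂) :
    ∃ x ∈ A₁, ∃ y ∈ A₂, G.Adj x y := by
  have hmem : ∀ x, x ∈ A₁ ∪ A₂ ↔ x ≠ u ∧ x ≠ v := fun x => by simp [hunion]
  have hv₁ : v ∉ A₁ := fun h => ((hmem v).mp (Or.inl h)).2 rfl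
  obtain ⟨x, hx, y, hy, hxy⟩ :=
    hG.exists_adj_of_mem_of_notMem (y := v) (Set.mem_insert u A₁) (by simp [huv.symm, hv₁])
  simp only [Set.mem_insert_iff, not_or] at hx hy
  rcases hx with rfl | hx
  · exact absurd (hNuA hxy) hy.2
  · have hyv : y ≠ v := fun h => Set.disjoint_left.mp hdisj hx (hNvA (h ▸ hxy).symm)
    exact ⟨x, hx, y, ((hmem y).mpr ⟨hy.1, hyv⟩).resolve_left hy.2, hxy⟩

theorem containsAsContraction_pathGraph_four_of_partition (hG : G.Preconnected) {u v : V}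
    (huv : u ≠ v) (hnadj : ¬ G.Adj u v) (hNu : (G.neighborSet u).Nonempty)
    (hNv : (G.neighborSet v).Nonempty)
    {A₁ A₂ : Set V} (hdisj : Disjoint A₁ A₂) (hunion : A₁ ∪ A₂ = ({u, v} : Set V)ᶜ)
    (hNuA : G.neighborSet u ⊆ A₁) (hNvA : G.neighborSet v ⊆ A₂)
    (hA₁ : (G.induce A₁).Connected) (hA₂ : (G.induce A₂).Connected) :
    ContainsAsContraction G (pathGraph 4) := by
  have hmem : ∀ x, x ∈ A₁ ∪ A₂ ↔ x ≠ u ∧ x ≠ v := fun x => by simp [hunion]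
  have hu₁ : u ∉ A₁ := fun h => ((hmem u).mp (Or.inl h)).1 rfl
  have hu₂ : u ∉ A₂ := fun h => ((hmem u).mp (Or.inr h)).1 rfl
  have hv₁ : v ∉ A₁ := fun h => ((hmem v).mp (Or.inl h)).2 rfl
  have hv₂ : v ∉ A₂ := fun h => ((hmem v).mp (Or.inr h)).2 rfl
  have hu₂' : ∀ y ∈ A₂, ¬ G.Adj u y := fun y hy h => Set.disjoint_left.mp hdisj (hNuA h) hy
  have hv₁' : ∀ x ∈ A₁, ¬ G.Adj x v := fun x hx h => Set.disjoint_left.mp hdisj hx (hNvA h.symm)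
  have hcross : ∃ x ∈ A₁, ∃ y ∈ A₂, G.Adj x y :=
    exists_adj_of_union_eq_compl_pair hG huv hdisj hunion hNuA hNvA
  obtain ⟨x, hx⟩ := hNu
  obtain ⟨y, hy⟩ := hNv
  have hu₁' : ∃ y ∈ A₁, G.Adj u y := ⟨x, hNuA hx, hx⟩
  have hv₂' : ∃ x ∈ A₂, G.Adj x v := ⟨y, hNvA hy, hy.symm⟩
  have hsingleton : ∀ w : V, (G.induce {w}).Connected := fun w =>
    @Connected.mk _ _ Preconnected.of_subsingleton ⟨⟨w, rfl⟩⟩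
  refine ⟨![{u}, A₁, A₂, {v}], IsWitnessStructure.of_lt ?_ ?_ ?_ ?_ ?_⟩
  · intro i
    fin_cases i
    exacts [Set.singleton_nonempty u, ⟨x, hNuA hx⟩, ⟨y, hNvA hy⟩, Set.singleton_nonempty v]
  · intro i j hij
    fin_cases i <;> fin_cases j <;> simp_all
  · refine Set.eq_univ_of_forall fun z => Set.mem_iUnion.mpr ?_
    by_cases hzu : z = u
    · exact ⟨0, hzu⟩
    by_cases hzv : z = v
    · exact ⟨3, hzv⟩
    rcases (hmem z).mpr ⟨hzu, hzv⟩ with hz | hz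
    exacts [⟨1, hz⟩, ⟨2, hz⟩]
  · intro i
    fin_cases i
    exacts [hsingleton u, hA₁, hA₂, hsingleton v]
  · intro i j hij
    fin_cases i <;> fin_cases j <;> simp_all [pathGraph_adj]

end PathGraphFour

theorem stmt_5 {V : Type} [Fintype V] (G : SimpleGraph V) (hG : G.Connected) :
    ContainsAsContraction G (SimpleGraph.pathGraph 4) ↔
      ∃ u v : V, u ≠ v ∧ ¬ G.Adj u v ∧
        (G.neighborSet u).Nonempty ∧ (G.neighborSet v).Nonempty ∧
        G.neighborSet u ∩ G.neighborSet v = ∅ ∧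
        ∃ A₁ A₂ : Set V, Disjoint A₁ A₂ ∧ A₁ ∪ A₂ = ({u, v} : Set V)ᶜ ∧
          G.neighborSet u ⊆ A₁ ∧ G.neighborSet v ⊆ A₂ ∧
          (G.induce A₁).Connected ∧ (G.induce A₂).Connected := by
  constructor
  · rintro ⟨W, hW⟩
    exact hW.exists_partition_of_pathGraph_four hG.preconnected
  · rintro ⟨u, v, huv, hnadj, hNu, hNv, -, A₁, A₂, hdisj, hunion, hNuA, hNvA, hA₁, hA₂⟩
    exact containsAsContraction_pathGraph_four_of_partition hG.preconnected huv hnadj hNu hNv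
      hdisj hunion hNuA hNvA hA₁ hA₂
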